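/- Let O and O' be partial orientations of a finite connected simple graph G with O' acyclic. Then O and O' are equivalent in the generalized cycle-cocycle reversal system (by a finite sequence of edge pivots, cycle reversals and cocycle reversals) if and only if they are equivalent in the generalized cocycle reversal system (by a finite sequence of edge pivots and cocycle reversals only). -/

import Mathlib

/-- A partial orientation of a simple graph `G`: each edge of some subset of the
edges of `G` is given a direction; `dir u v = true` means the edge `{u,v}` is
oriented from `u` towards `v`. -/
structure PartialOrientation {V : Type*} (G : SimpleGraph V) where
  dir : V → V → Bool
  adj_of_dir : ∀ u v, dir u v = true → G.Adj u v
  not_both : ∀ u v, dir u v = true → dir v u = false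

namespace PartialOrientation

variable {V : Type*} {G : SimpleGraph V}

/-- The indegree of a vertex in a partial orientation. -/
def indeg [Fintype V] (O : PartialOrientation G) (v : V) : ℕ :=
  (Finset.univ.filter (fun u => O.dir u v = true)).card

/-- The divisor associated to a partial orientation: `D_O(v) = indeg(v) - 1`. -/
def div [Fintype V] (O : PartialOrientation G) (v : V) : ℤ :=
  (O.indeg v : ℤ) - 1

/-- A partial orientation is acyclic if it has no directed cycle (equivalently,
no vertex reaches itself by a nonempty directed walk). -/
def Acyclic (O : PartialOrientation G) : Prop :=
  ∀ v, ¬ Relation.TransGen (fun a b => O.dir a b = true) v v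

/-- A partial orientation is sourceless if every vertex has an incoming oriented edge. -/
def Sourceless (O : PartialOrientation G) : Prop :=
  ∀ v, ∃ u, O.dir u v = true

/-- A partial orientation is `q`-connected if every vertex is reachable from `q`
by a (possibly empty) directed path. -/
def QConnected (O : PartialOrientation G) (q : V) : Prop :=
  ∀ v, Relation.ReflTransGen (fun a b => O.dir a b = true) q v

/-- A partial orientation is full if every edge of `G` is oriented. -/
def IsFull (O : PartialOrientation G) : Prop :=
  ∀ u v, G.Adj u v → (O.dir u v = true ∨ O.dir v u = true)

/-- An edge pivot at a vertex `v`: an edge oriented towards `v` becomes unoriented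
and a previously unoriented edge incident to `v` becomes oriented towards `v`. -/
def EdgePivot (O O' : PartialOrientation G) : Prop :=
  ∃ v u w, O.dir u v = true ∧ G.Adj w v ∧ O.dir w v = false ∧ O.dir v w = false ∧
    ∀ a b, (O'.dir a b = true ↔
      ((a = w ∧ b = v) ∨ (O.dir a b = true ∧ ¬(a = u ∧ b = v))))

/-- A cycle reversal: all edges of a consistently oriented (directed) cycle are reversed. -/
def CycleReversal (O O' : PartialOrientation G) : Prop :=
  ∃ (n : ℕ) (σ : Fin (n + 1) → V), Function.Injective σ ∧
    (∀ i : Fin (n + 1), O.dir (σ i) (σ (i + 1)) = true) ∧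
    ∀ a b, (O'.dir a b = true ↔
      ((∃ i : Fin (n + 1), a = σ (i + 1) ∧ b = σ i) ∨
        (O.dir a b = true ∧ ¬ ∃ i : Fin (n + 1), a = σ i ∧ b = σ (i + 1))))

/-- A directed path reversal: all edges of a directed path are reversed. -/
def PathReversal (O O' : PartialOrientation G) : Prop :=
  ∃ (n : ℕ) (σ : Fin (n + 1) → V), Function.Injective σ ∧
    (∀ i : Fin n, O.dir (σ i.castSucc) (σ i.succ) = true) ∧
    ∀ a b, (O'.dir a b = true ↔
      ((∃ i : Fin n, a = σ i.succ ∧ b = σ i.castSucc) ∨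
        (O.dir a b = true ∧ ¬ ∃ i : Fin n, a = σ i.castSucc ∧ b = σ i.succ)))

/-- A cocycle (cut) reversal: all edges of a cut `(S, V∖S)` in which every edge of
the cut is oriented, all towards `S`, are reversed. -/
def CocycleReversal (O O' : PartialOrientation G) : Prop :=
  ∃ S : Set V,
    (∀ u v, G.Adj u v → u ∉ S → v ∈ S → O.dir u v = true) ∧
    ∀ a b, (O'.dir a b = true ↔
      ((a ∈ S ∧ b ∉ S ∧ O.dir b a = true) ∨
        ((a ∈ S ↔ b ∈ S) ∧ O.dir a b = true)))

/-- Equivalence in the generalized cycle reversal system: a finite sequence of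
edge pivots and cycle reversals. -/
def GenCycleEquiv (O O' : PartialOrientation G) : Prop :=
  Relation.ReflTransGen (fun A B => EdgePivot A B ∨ CycleReversal A B) O O'

/-- Equivalence in the generalized cocycle reversal system: a finite sequence of
edge pivots and cocycle reversals. -/
def GenCocycleEquiv (O O' : PartialOrientation G) : Prop :=
  Relation.ReflTransGen (fun A B => EdgePivot A B ∨ CocycleReversal A B) O O'

/-- Equivalence in the generalized cycle-cocycle reversal system: a finite sequence
of edge pivots, cycle reversals and cocycle reversals. -/
def GenCycleCocycleEquiv (O O' : PartialOrientation G) : Prop :=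
  Relation.ReflTransGen
    (fun A B => EdgePivot A B ∨ CycleReversal A B ∨ CocycleReversal A B) O O'

/-- Equivalence in the (plain) cocycle reversal system: a finite sequence of
cocycle reversals. -/
def CocycleEquiv (O O' : PartialOrientation G) : Prop :=
  Relation.ReflTransGen (fun A B => CocycleReversal A B) O O'

end PartialOrientation

/-- The degree of a divisor: the total number of chips. -/
def degDiv {V : Type*} [Fintype V] (D : V → ℤ) : ℤ := ∑ v, D v

/-- `deg⁺` of a divisor: the sum of its positive values. -/
def degPlus {V : Type*} [Fintype V] (D : V → ℤ) : ℤ := ∑ v, max (D v) 0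

/-- A divisor is effective if all of its values are nonnegative. -/
def EffectiveDiv {V : Type*} (D : V → ℤ) : Prop := ∀ v, 0 ≤ D v

/-- Linear equivalence of divisors: `D - D'` lies in the ℤ-span of the columns of
the Laplacian, i.e. there is an integral firing vector `f` with
`D - D' = Δ f`. -/
def LinEquiv {V : Type*} [Fintype V] (G : SimpleGraph V) [DecidableRel G.Adj]
    (D D' : V → ℤ) : Prop :=
  ∃ f : V → ℤ, ∀ v, D v - D' v = ∑ u ∈ Finset.univ.filter (fun u => G.Adj v u), (f v - f u)

/-- The Baker–Norine rank of a divisor: one less than the minimal degree of an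
effective divisor `E` such that `D - E` is not linearly equivalent to any
effective divisor.  In particular `divisorRank G D = -1` iff `D` is not linearly
equivalent to an effective divisor. -/
noncomputable def divisorRank {V : Type*} [Fintype V] (G : SimpleGraph V)
    [DecidableRel G.Adj] (D : V → ℤ) : ℤ :=
  ((sInf { n : ℕ | ∃ E : V → ℤ, EffectiveDiv E ∧ degDiv E = (n : ℤ) ∧
      ¬ ∃ E' : V → ℤ, EffectiveDiv E' ∧ LinEquiv G (fun v => D v - E v) E' } : ℕ) : ℤ) - 1

/-- The genus (cyclomatic number) of a graph: `g = |E| - |V| + 1`. -/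
def graphGenus {V : Type*} [Fintype V] [DecidableEq V] (G : SimpleGraph V)
    [DecidableRel G.Adj] : ℤ :=
  (G.edgeFinset.card : ℤ) - (Fintype.card V : ℤ) + 1

/-- The number of edges of the induced subgraph `G[T]`. -/
def inducedEdgeCount {V : Type*} [Fintype V] [DecidableEq V] (G : SimpleGraph V)
    [DecidableRel G.Adj] (T : Finset V) : ℕ :=
  (G.edgeFinset.filter (fun e => e ∈ T.sym2)).card

/-- `χ̄(S, D) = |E| - |E(G[V∖S])| - |S| - deg(D|_S)`. -/
def chiBar {V : Type*} [Fintype V] [DecidableEq V] (G : SimpleGraph V)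
    [DecidableRel G.Adj] (D : V → ℤ) (S : Finset V) : ℤ :=
  (G.edgeFinset.card : ℤ) - (inducedEdgeCount G Sᶜ : ℤ) - (S.card : ℤ) - ∑ v ∈ S, D v

/-- `outdeg_A(v)`: the number of edges joining `v` to vertices outside `A`. -/
def outdegOf {V : Type*} [Fintype V] [DecidableEq V] (G : SimpleGraph V) [DecidableRel G.Adj]
    (A : Finset V) (v : V) : ℕ :=
  (Finset.univ.filter (fun u => G.Adj v u ∧ u ∉ A)).card

/-- A divisor `D` is `q`-reduced if `D(v) ≥ 0` for `v ≠ q` and every nonempty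
set `A ⊆ V ∖ {q}` contains a vertex sent into debt by firing `A`. -/
def QReduced {V : Type*} [Fintype V] [DecidableEq V] (G : SimpleGraph V) [DecidableRel G.Adj]
    (q : V) (D : V → ℤ) : Prop :=
  (∀ v, v ≠ q → 0 ≤ D v) ∧
    ∀ A : Finset V, A.Nonempty → q ∉ A → ∃ v ∈ A, D v - (outdegOf G A v : ℤ) < 0

/-- The canonical divisor `K(v) = deg(v) - 2`. -/
def canonicalDiv {V : Type*} [Fintype V] (G : SimpleGraph V) [DecidableRel G.Adj]
    (v : V) : ℤ :=
  (G.degree v : ℤ) - 2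


namespace PartialOrientation

section Aux

open Fin.NatCast Fin.CommRing

variable {V : Type*} {G : SimpleGraph V}

private lemma dir_ne {O : PartialOrientation G} {a b : V} (h : O.dir a b = true) : a ≠ b :=
  (O.adj_of_dir a b h).ne

private lemma dir_false {O : PartialOrientation G} {a b : V} (h : O.dir a b = true) :
    O.dir b a = false := O.not_both a b h

private lemma dir_false' {O : PartialOrientation G} {a b : V} (h : O.dir a b = true) :
    ¬ O.dir b a = true := by simp [dir_false h]

private lemma exists_mk (f : V → V → Prop) (hadj : ∀ a b, f a b → G.Adj a b)
    (hnb : ∀ a b, f a b → ¬ f b a) :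
    ∃ O : PartialOrientation G, ∀ a b, O.dir a b = true ↔ f a b := by
  classical
  refine ⟨⟨fun a b => decide (f a b), ?_, ?_⟩, ?_⟩
  · intro u v h; exact hadj u v (by simpa using h)
  · intro u v h
    have := hnb u v (by simpa using h)
    simpa using this
  · intro a b; simp

private lemma exists_pivot (X : PartialOrientation G) {u v w : V}
    (hu : X.dir u v = true) (hadj : G.Adj w v)
    (h1 : X.dir w v = false) (h2 : X.dir v w = false) :
    ∃ Y : PartialOrientation G, EdgePivot X Y ∧
      ∀ a b, Y.dir a b = true ↔ ((a = w ∧ b = v) ∨ (X.dir a b = true ∧ ¬(a = u ∧ b = v))) := by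
  have ha : ∀ a b : V, ((a = w ∧ b = v) ∨ (X.dir a b = true ∧ ¬(a = u ∧ b = v))) → G.Adj a b := by
    rintro a b (⟨rfl, rfl⟩ | ⟨h, -⟩)
    exacts [hadj, X.adj_of_dir _ _ h]
  have hn : ∀ a b : V, ((a = w ∧ b = v) ∨ (X.dir a b = true ∧ ¬(a = u ∧ b = v))) →
      ¬((b = w ∧ a = v) ∨ (X.dir b a = true ∧ ¬(b = u ∧ a = v))) := by
    rintro a b (⟨rfl, rfl⟩ | ⟨h, hne⟩)
    · rintro (⟨h3, -⟩ | ⟨h3, -⟩)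
      · exact hadj.ne' h3
      · simp [h2] at h3
    · rintro (⟨rfl, rfl⟩ | ⟨h3, -⟩)
      · simp [h2] at h
      · simp [dir_false h] at h3
  obtain ⟨Y, hY⟩ := exists_mk (G := G)
    (fun a b => (a = w ∧ b = v) ∨ (X.dir a b = true ∧ ¬(a = u ∧ b = v))) ha hn
  exact ⟨Y, ⟨v, u, w, hu, hadj, h1, h2, fun a b => hY a b⟩, hY⟩

private lemma exists_cocycle (X : PartialOrientation G) (S : Set V)
    (hcut : ∀ u v, G.Adj u v → u ∉ S → v ∈ S → X.dir u v = true) :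
    ∃ Y : PartialOrientation G, CocycleReversal X Y ∧ ∀ a b, Y.dir a b = true ↔
      ((a ∈ S ∧ b ∉ S ∧ X.dir b a = true) ∨ ((a ∈ S ↔ b ∈ S) ∧ X.dir a b = true)) := by
  have ha' : ∀ a b : V, ((a ∈ S ∧ b ∉ S ∧ X.dir b a = true) ∨ ((a ∈ S ↔ b ∈ S) ∧ X.dir a b = true)) → G.Adj a b := by
    rintro a b (⟨-, -, h⟩ | ⟨-, h⟩)
    exacts [(X.adj_of_dir _ _ h).symm, X.adj_of_dir _ _ h]
  have hn' : ∀ a b : V, ((a ∈ S ∧ b ∉ S ∧ X.dir b a = true) ∨ ((a ∈ S ↔ b ∈ S) ∧ X.dir a b = true)) →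
      ¬((b ∈ S ∧ a ∉ S ∧ X.dir a b = true) ∨ ((b ∈ S ↔ a ∈ S) ∧ X.dir b a = true)) := by
    rintro a b (⟨ha, hb, h⟩ | ⟨hiff, h⟩)
    · rintro (⟨hb', -, -⟩ | ⟨hiff, h'⟩)
      · exact hb hb'
      · exact hb (hiff.mpr ha)
    · rintro (⟨hb, ha, -⟩ | ⟨-, h'⟩)
      · exact ha (hiff.mpr hb)
      · simp [dir_false h] at h'
  obtain ⟨Y, hY⟩ := exists_mk (G := G)
    (fun a b => (a ∈ S ∧ b ∉ S ∧ X.dir b a = true) ∨ ((a ∈ S ↔ b ∈ S) ∧ X.dir a b = true)) ha' hn'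
  exact ⟨Y, ⟨S, hcut, fun a b => hY a b⟩, hY⟩

private lemma not_cycleReversal_of_acyclic {X Y : PartialOrientation G} (hY : Y.Acyclic) :
    ¬ CycleReversal X Y := by
  rintro ⟨n, σ, hinj, hdir, hiff⟩
  have hstep : ∀ i : Fin (n + 1), Y.dir (σ (i + 1)) (σ i) = true :=
    fun i => (hiff _ _).2 (Or.inl ⟨i, rfl, rfl⟩)
  have key : ∀ k : ℕ, Relation.ReflTransGen (fun a b => Y.dir a b = true)
      (σ (k : Fin (n + 1))) (σ 0) := by
    intro k
    induction k with
    | zero =>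
      simp only [Nat.cast_zero]
      exact Relation.ReflTransGen.refl
    | succ k ih =>
      refine Relation.ReflTransGen.head ?_ ih
      have := hstep (k : Fin (n + 1))
      rwa [show ((k : Fin (n+1)) + 1) = ((k + 1 : ℕ) : Fin (n + 1)) by push_cast; ring] at this
  refine hY (σ 0) (Relation.TransGen.head' ?_ (key n))
  have := hstep (n : Fin (n + 1))
  rwa [show ((n : Fin (n+1)) + 1) = 0 by
    rw [show ((n : Fin (n+1)) + 1) = ((n + 1 : ℕ) : Fin (n + 1)) by push_cast; ring,
      Fin.natCast_self]] at this

private lemma rotate (k : ℕ) : ∀ (r : Fin (k+1) → V), Function.Injective r →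
    ∀ (X : PartialOrientation G) (w : V), G.Adj w (r (Fin.last k)) →
    X.dir w (r (Fin.last k)) = false → X.dir (r (Fin.last k)) w = false →
    (∀ i : Fin k, X.dir (r i.castSucc) (r i.succ) = true) →
    ∃ X' : PartialOrientation G,
      Relation.ReflTransGen (fun A B => EdgePivot A B ∨ CocycleReversal A B) X X' ∧
      ∀ a b, X'.dir a b = true ↔
        ((k ≠ 0 ∧ a = w ∧ b = r (Fin.last k)) ∨
         (∃ i : Fin k, (i : ℕ) ≠ 0 ∧ a = r i.succ ∧ b = r i.castSucc) ∨
         (X.dir a b = true ∧ ¬ ∃ i : Fin k, a = r i.castSucc ∧ b = r i.succ)) := by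
  induction k with
  | zero =>
    intro r hinj X w _ _ _ _
    exact ⟨X, Relation.ReflTransGen.refl, fun a b => by simp⟩
  | succ k IH =>
    intro r hinj X w hadj hwv hvw hpath
    have hu : X.dir (r (Fin.last k).castSucc) (r (Fin.last (k+1))) = true := by
      have := hpath (Fin.last k); rwa [Fin.succ_last] at this
    obtain ⟨X₁, hpiv, hX₁⟩ := exists_pivot X hu hadj hwv hvw
    have hwne : w ≠ r (Fin.last (k+1)) := hadj.ne
    have hwk : w ≠ r ((Fin.last k).castSucc) := by
      rintro rfl; simp [hu] at hwv
    have F1 : ∀ (x : Fin (k+1)), r x.castSucc ≠ r (Fin.last (k+1)) :=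
      fun x h => absurd (hinj h) (Fin.castSucc_lt_last x).ne
    have hf1 : X₁.dir (r (Fin.last (k+1))) (r (Fin.last k).castSucc) = false := by
      refine Bool.eq_false_iff.mpr (fun h => ?_)
      rcases (hX₁ _ _).1 h with ⟨h1, -⟩ | ⟨h1, -⟩
      · exact hwne h1.symm
      · simp [dir_false hu] at h1
    have hf2 : X₁.dir (r (Fin.last k).castSucc) (r (Fin.last (k+1))) = false := by
      refine Bool.eq_false_iff.mpr (fun h => ?_)
      rcases (hX₁ _ _).1 h with ⟨h1, -⟩ | ⟨-, h2⟩
      · exact hwk h1.symm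
      · exact h2 ⟨rfl, rfl⟩
    have hpath1 : ∀ i : Fin k, X₁.dir (r i.castSucc.castSucc) (r i.succ.castSucc) = true := by
      intro i
      refine (hX₁ _ _).2 (Or.inr ⟨?_, ?_⟩)
      · have := hpath i.castSucc
        rwa [Fin.succ_castSucc] at this
      · rintro ⟨-, hb⟩
        exact F1 _ hb
    obtain ⟨X₂, hch2, hX₂⟩ := IH (fun i => r i.castSucc)
      (fun a b h => Fin.castSucc_injective _ (hinj h))
      X₁ (r (Fin.last (k+1))) (X.adj_of_dir _ _ hu).symm hf1 hf2 hpath1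
    refine ⟨X₂, Relation.ReflTransGen.head (Or.inl hpiv) hch2, fun a b => ?_⟩
    rw [hX₂ a b, hX₁ a b]
    have HB' : (∃ i : Fin (k+1), (i:ℕ) ≠ 0 ∧ a = r i.succ ∧ b = r i.castSucc) ↔
        ((∃ i : Fin k, (i:ℕ) ≠ 0 ∧ a = r i.succ.castSucc ∧ b = r i.castSucc.castSucc) ∨
          (k ≠ 0 ∧ a = r (Fin.last (k+1)) ∧ b = r (Fin.last k).castSucc)) := by
      constructor
      · rintro ⟨i, hi0, ha, hb⟩
        by_cases hi : i = Fin.last k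
        · subst hi
          refine Or.inr ⟨by simpa using hi0, by rwa [Fin.succ_last] at ha, hb⟩
        · obtain ⟨j, rfl⟩ := Fin.exists_castSucc_eq.mpr hi
          exact Or.inl ⟨j, by simpa using hi0, by rwa [Fin.succ_castSucc] at ha, hb⟩
      · rintro (⟨j, h0, ha, hb⟩ | ⟨hk, ha, hb⟩)
        · exact ⟨j.castSucc, by simpa using h0, by rwa [Fin.succ_castSucc], hb⟩
        · exact ⟨Fin.last k, by simpa using hk, by rwa [Fin.succ_last], hb⟩
    have HC' : (∃ i : Fin (k+1), a = r i.castSucc ∧ b = r i.succ) ↔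
        ((∃ i : Fin k, a = r i.castSucc.castSucc ∧ b = r i.succ.castSucc) ∨
          (a = r (Fin.last k).castSucc ∧ b = r (Fin.last (k+1)))) := by
      constructor
      · rintro ⟨i, ha, hb⟩
        by_cases hi : i = Fin.last k
        · subst hi
          exact Or.inr ⟨ha, by rwa [Fin.succ_last] at hb⟩
        · obtain ⟨j, rfl⟩ := Fin.exists_castSucc_eq.mpr hi
          exact Or.inl ⟨j, ha, by rwa [Fin.succ_castSucc] at hb⟩
      · rintro (⟨j, ha, hb⟩ | ⟨ha, hb⟩)
        · exact ⟨j.castSucc, ha, by rwa [Fin.succ_castSucc]⟩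
        · exact ⟨Fin.last k, ha, by rwa [Fin.succ_last]⟩
    have HWC : (a = w ∧ b = r (Fin.last (k+1))) →
        ¬ (∃ i : Fin k, a = r i.castSucc.castSucc ∧ b = r i.succ.castSucc) := by
      rintro ⟨-, rfl⟩ ⟨i, -, hb⟩
      exact F1 _ hb.symm
    constructor
    · rintro (⟨hk0, ha, hb⟩ | ⟨i, hi0, ha, hb⟩ | ⟨(⟨ha, hb⟩ | ⟨hXd, hD⟩), hC⟩)
      · exact Or.inr (Or.inl (HB'.mpr (Or.inr ⟨hk0, ha, hb⟩)))
      · exact Or.inr (Or.inl (HB'.mpr (Or.inl ⟨i, hi0, ha, hb⟩)))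
      · exact Or.inl ⟨Nat.succ_ne_zero k, ha, hb⟩
      · exact Or.inr (Or.inr ⟨hXd, fun hC' => (HC'.mp hC').elim hC hD⟩)
    · rintro (⟨-, ha, hb⟩ | hB' | ⟨hXd, hC'⟩)
      · exact Or.inr (Or.inr ⟨Or.inl ⟨ha, hb⟩, HWC ⟨ha, hb⟩⟩)
      · rcases HB'.mp hB' with hB | hA
        · exact Or.inr (Or.inl hB)
        · exact Or.inl hA
      · exact Or.inr (Or.inr ⟨Or.inr ⟨hXd, fun hD => hC' (HC'.mpr (Or.inr hD))⟩,
          fun hC => hC' (HC'.mpr (Or.inl hC))⟩)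

private lemma commute {X Y Z : PartialOrientation G} (hXY : CycleReversal X Y)
    (hYZ : EdgePivot Y Z ∨ CocycleReversal Y Z) :
    ∃ X', Relation.ReflTransGen (fun A B => EdgePivot A B ∨ CocycleReversal A B) X X' ∧
      (CycleReversal X' Z ∨ X' = Z) := by
  obtain ⟨n, σ, hinj, hdir, hiff⟩ := hXY
  have hYcyc : ∀ i, Y.dir (σ (i+1)) (σ i) = true := fun i => (hiff _ _).2 (Or.inl ⟨i, rfl, rfl⟩)
  have hYrev : ∀ i, Y.dir (σ i) (σ (i+1)) = false := fun i => dir_false (hYcyc i)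
  have offcyc : ∀ a b : V, (¬∃ i, a = σ i ∧ b = σ (i+1)) → (¬∃ i, b = σ i ∧ a = σ (i+1)) →
      Y.dir a b = X.dir a b := by
    intro a b h1 h2
    rw [Bool.eq_iff_iff, hiff]
    constructor
    · rintro (⟨i, ha, hb⟩ | ⟨h, -⟩)
      · exact absurd ⟨i, hb, ha⟩ h2
      · exact h
    · intro h; exact Or.inr ⟨h, h1⟩
  rcases hYZ with ⟨v, u, w, huv, hadjwv, hwv, hvw, hZ⟩ | ⟨S, hcut, hZ⟩
  · -- pivot case
    have hnc1 : ¬∃ i, w = σ i ∧ v = σ (i+1) := by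
      rintro ⟨i, rfl, rfl⟩; simp [hYcyc i] at hvw
    have hnc2 : ¬∃ i, v = σ i ∧ w = σ (i+1) := by
      rintro ⟨i, rfl, rfl⟩; simp [hYcyc i] at hwv
    have hXwv : X.dir w v = false := by rw [← offcyc w v hnc1 hnc2]; exact hwv
    have hXvw : X.dir v w = false := by rw [← offcyc v w hnc2 hnc1]; exact hvw
    by_cases hon : ∃ i, v = σ i ∧ u = σ (i+1)
    · -- the removed edge lies on the cycle: rotate
      obtain ⟨j, hv, hu'⟩ := hon
      subst hv; subst hu'
      have hn2 : 2 ≤ n := by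
        rcases n with _ | _ | n
        · have := hdir 0
          rw [show ((0 : Fin 1) + 1) = 0 from Subsingleton.elim _ _] at this
          exact absurd rfl (dir_ne this)
        · have h0 := hdir 0
          have h1 := hdir 1
          rw [show ((0 : Fin 2) + 1) = 1 from rfl] at h0
          rw [show ((1 : Fin 2) + 1) = 0 from rfl] at h1
          exact absurd h1 (dir_false' h0)
        · omega
      have hone_last : (1 : Fin (n+1)) + Fin.last n = 0 := by
        rw [add_comm (1 : Fin (n+1)) (Fin.last n)]; exact Fin.last_add_one n
      set p : Fin (n+1) → V := fun t => σ ((j+1) + t) with hp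
      have pinj : Function.Injective p := fun a b h => by
        have := hinj h; exact add_left_cancel this
      have plast : p (Fin.last n) = σ j := by
        show σ ((j+1) + Fin.last n) = σ j
        rw [add_assoc, hone_last, add_zero]
      have T1 : ∀ a b : V, (∃ i : Fin n, a = p i.castSucc ∧ b = p i.succ) ↔
          (∃ m, m ≠ j ∧ a = σ m ∧ b = σ (m+1)) := by
        intro a b
        constructor
        · rintro ⟨i, ha, hb⟩
          refine ⟨(j+1) + i.castSucc, ?_, ha, ?_⟩
          · intro h
            have h2 : (1 : Fin (n+1)) + i.castSucc = 0 := by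
              have := h
              rw [add_assoc] at this
              exact add_left_cancel (by rw [this, add_zero])
            have : i.castSucc = Fin.last n := by
              have := h2.trans hone_last.symm
              exact add_left_cancel this
            exact absurd this (Fin.castSucc_lt_last i).ne
          · rw [hb]
            show σ ((j+1) + i.succ) = _
            rw [← Fin.coeSucc_eq_succ, ← add_assoc]
        · rintro ⟨m, hm, ha, hb⟩
          have hx : m - (j+1) ≠ Fin.last n := by
            intro h
            apply hm
            have : (j+1) + (m - (j+1)) = m := by ring
            rw [h] at this
            rw [← this, add_assoc, hone_last, add_zero]
          obtain ⟨i, hi⟩ := Fin.exists_castSucc_eq.mpr hx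
          refine ⟨i, ?_, ?_⟩
          · rw [ha]; show _ = σ ((j+1) + i.castSucc); rw [hi]; congr 1; ring
          · rw [hb]; show _ = σ ((j+1) + i.succ)
            rw [← Fin.coeSucc_eq_succ, hi, ← add_assoc]
            congr 1
            ring
      have T2 : ∀ a b : V, (∃ i : Fin n, (i : ℕ) ≠ 0 ∧ a = p i.succ ∧ b = p i.castSucc) ↔
          (∃ m, m ≠ j ∧ m ≠ j + 1 ∧ a = σ (m+1) ∧ b = σ m) := by
        intro a b
        constructor
        · rintro ⟨i, hi0, ha, hb⟩
          refine ⟨(j+1) + i.castSucc, ?_, ?_, ?_, hb⟩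
          · intro h
            have h2 : (1 : Fin (n+1)) + i.castSucc = 0 := by
              have := h
              rw [add_assoc] at this
              exact add_left_cancel (by rw [this, add_zero])
            have : i.castSucc = Fin.last n := by
              have := h2.trans hone_last.symm
              exact add_left_cancel this
            exact absurd this (Fin.castSucc_lt_last i).ne
          · intro h
            have : i.castSucc = (0 : Fin (n+1)) := by
              have := h
              exact add_left_cancel (by rw [this, add_zero])
            apply hi0
            simpa [Fin.ext_iff] using this
          · rw [ha]
            show σ ((j+1) + i.succ) = _
            rw [← Fin.coeSucc_eq_succ, ← add_assoc]
        · rintro ⟨m, hm, hm1, ha, hb⟩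
          have hx : m - (j+1) ≠ Fin.last n := by
            intro h
            apply hm
            have : (j+1) + (m - (j+1)) = m := by ring
            rw [h] at this
            rw [← this, add_assoc, hone_last, add_zero]
          obtain ⟨i, hi⟩ := Fin.exists_castSucc_eq.mpr hx
          refine ⟨i, ?_, ?_, ?_⟩
          · intro h0
            apply hm1
            have : i.castSucc = (0 : Fin (n+1)) := by
              rwa [Fin.ext_iff, Fin.coe_castSucc]
            rw [this] at hi
            have : m - (j+1) = 0 := hi.symm
            have h5 : m = j + 1 := by
              have := this
              rwa [sub_eq_zero] at this
            exact h5
          · rw [ha]; show _ = σ ((j+1) + i.succ)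
            rw [← Fin.coeSucc_eq_succ, hi, ← add_assoc]
            congr 1
            ring
          · rw [hb]; show _ = σ ((j+1) + i.castSucc); rw [hi]; congr 1; ring
      have hadj_w : G.Adj w (p (Fin.last n)) := by rw [plast]; exact hadjwv
      have hXw1 : X.dir w (p (Fin.last n)) = false := by rw [plast]; exact hXwv
      have hXw2 : X.dir (p (Fin.last n)) w = false := by rw [plast]; exact hXvw
      have hpathp : ∀ i : Fin n, X.dir (p i.castSucc) (p i.succ) = true := by
        intro i
        show X.dir (σ ((j+1) + i.castSucc)) (σ ((j+1) + i.succ)) = true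
        rw [show (j+1) + i.succ = ((j+1) + i.castSucc) + 1 by
          rw [← Fin.coeSucc_eq_succ, ← add_assoc]]
        exact hdir _
      obtain ⟨X₂, hch, hX₂⟩ := rotate n p pinj X w hadj_w hXw1 hXw2 hpathp
      have hn0 : n ≠ 0 := by omega
      -- final pivot from X₂ to Z
      have g1 : X₂.dir (σ j) (σ (j+1)) = true := by
        refine (hX₂ _ _).2 (Or.inr (Or.inr ⟨hdir j, ?_⟩))
        rw [T1]
        rintro ⟨m, hm, h1, h2⟩
        exact hm (hinj h1).symm
      have g2adj : G.Adj (σ (j+1+1)) (σ (j+1)) := (X.adj_of_dir _ _ (hdir (j+1))).symm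
      have g3 : X₂.dir (σ (j+1+1)) (σ (j+1)) = false := by
        refine Bool.eq_false_iff.mpr (fun h => ?_)
        rcases (hX₂ _ _).1 h with ⟨-, -, h2⟩ | hB | ⟨hXd, -⟩
        · rw [plast] at h2
          exact dir_ne (hdir j) h2.symm
        · rw [T2] at hB
          obtain ⟨m, -, hm1, -, h2⟩ := hB
          exact hm1 (hinj h2).symm
        · exact dir_false' (hdir (j+1)) hXd
      have g4 : X₂.dir (σ (j+1)) (σ (j+1+1)) = false := by
        refine Bool.eq_false_iff.mpr (fun h => ?_)
        rcases (hX₂ _ _).1 h with ⟨-, -, h2⟩ | hB | ⟨-, hne⟩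
        · rw [plast] at h2
          have hd := hdir (j+1)
          rw [h2] at hd
          exact dir_false' (hdir j) hd
        · rw [T2] at hB
          obtain ⟨m, hm, -, h1, -⟩ := hB
          have : m = j := add_right_cancel ((hinj h1).symm : m + 1 = j + 1)
          exact hm this
        · rw [T1] at hne
          refine hne ⟨j+1, ?_, rfl, rfl⟩
          intro hj
          exact dir_ne (hdir j) (congrArg σ hj).symm
      refine ⟨Z, Relation.ReflTransGen.tail hch (Or.inl ?_), Or.inr rfl⟩
      refine ⟨σ (j+1), σ j, σ (j+1+1), g1, g2adj, g3, g4, fun a b => ?_⟩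
      rw [hZ a b, hiff a b, hX₂ a b, T1, T2, plast]
      have hwj : w ≠ σ j := hadjwv.ne
      constructor
      · rintro (⟨ha, hb⟩ | ⟨(⟨m, ha, hb⟩ | ⟨hXd, hF⟩), hRj⟩)
        · refine Or.inr ⟨Or.inl ⟨hn0, ha, hb⟩, ?_⟩
          rintro ⟨h1, -⟩
          exact hwj (ha.symm.trans h1)
        · by_cases hm1 : m = j + 1
          · subst hm1; exact Or.inl ⟨ha, hb⟩
          · by_cases hm0 : m = j
            · subst hm0; exact absurd ⟨ha, hb⟩ hRj
            · refine Or.inr ⟨Or.inr (Or.inl ⟨m, hm0, hm1, ha, hb⟩), ?_⟩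
              rintro ⟨-, h2⟩
              exact hm1 (hinj (hb.symm.trans h2))
        · refine Or.inr ⟨Or.inr (Or.inr ⟨hXd, ?_⟩), ?_⟩
          · rintro ⟨m, -, h1, h2⟩
            exact hF ⟨m, h1, h2⟩
          · rintro ⟨h1, h2⟩
            exact hF ⟨j, h1, h2⟩
      · rintro (⟨ha, hb⟩ | ⟨(⟨-, ha, hb⟩ | ⟨m, hmj, hmj1, ha, hb⟩ | ⟨hXd, hF⟩), hFj⟩)
        · refine Or.inr ⟨Or.inl ⟨j+1, ha, hb⟩, ?_⟩
          rintro ⟨-, h2⟩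
          exact dir_ne (hdir j) (h2.symm.trans hb)
        · exact Or.inl ⟨ha, hb⟩
        · refine Or.inr ⟨Or.inl ⟨m, ha, hb⟩, ?_⟩
          rintro ⟨-, h2⟩
          exact hmj (hinj (hb.symm.trans h2))
        · refine Or.inr ⟨Or.inr ⟨hXd, ?_⟩, ?_⟩
          · rintro ⟨i, h1, h2⟩
            by_cases hij : i = j
            · subst hij; exact hFj ⟨h1, h2⟩
            · exact hF ⟨i, hij, h1, h2⟩
          · rintro ⟨h1, h2⟩
            rw [h1, h2] at hXd
            exact dir_false' (hdir j) hXd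
    · -- the removed edge is off the cycle: just pivot
      have hnuv : ¬∃ i, u = σ i ∧ v = σ (i+1) := by
        rintro ⟨i, rfl, rfl⟩
        exact absurd huv (by simp [hYrev i])
      have hXuv : X.dir u v = true := by rw [← offcyc u v hnuv hon]; exact huv
      obtain ⟨X₁, hpiv, hX₁⟩ := exists_pivot X hXuv hadjwv hXwv hXvw
      refine ⟨X₁, Relation.ReflTransGen.single (Or.inl hpiv), Or.inl ⟨n, σ, hinj, ?_, ?_⟩⟩
      · intro i
        refine (hX₁ _ _).2 (Or.inr ⟨hdir i, ?_⟩)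
        rintro ⟨ha, hb⟩
        exact hnuv ⟨i, ha.symm, hb.symm⟩
      · intro a b
        rw [hZ a b, hiff a b, hX₁ a b]
        constructor
        · rintro (⟨ha, hb⟩ | ⟨(⟨i, ha, hb⟩ | ⟨hXd, hF⟩), hUV⟩)
          · refine Or.inr ⟨Or.inl ⟨ha, hb⟩, ?_⟩
            rintro ⟨i, h1, h2⟩
            exact hnc1 ⟨i, ha.symm.trans h1, hb.symm.trans h2⟩
          · exact Or.inl ⟨i, ha, hb⟩
          · exact Or.inr ⟨Or.inr ⟨hXd, hUV⟩, hF⟩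
        · rintro (⟨i, ha, hb⟩ | ⟨(⟨ha, hb⟩ | ⟨hXd, hUV⟩), hF⟩)
          · refine Or.inr ⟨Or.inl ⟨i, ha, hb⟩, ?_⟩
            rintro ⟨h1, h2⟩
            exact hon ⟨i, h2.symm.trans hb, h1.symm.trans ha⟩
          · exact Or.inl ⟨ha, hb⟩
          · exact Or.inr ⟨Or.inr ⟨hXd, hF⟩, hUV⟩
  · -- cocycle case
    have hsame_step : ∀ i, σ (i+1) ∈ S → σ i ∈ S := by
      intro i h1
      by_contra h2
      have := hcut (σ i) (σ (i+1)) ((Y.adj_of_dir _ _ (hYcyc i)).symm) h2 h1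
      simp [hYrev i] at this
    have hall : ∀ i i', σ i ∈ S → σ i' ∈ S := by
      have down : ∀ (k : ℕ) (i : Fin (n+1)), σ i ∈ S → σ (i - (k : Fin (n+1))) ∈ S := by
        intro k
        induction k with
        | zero => intro i hi; simpa using hi
        | succ k ih =>
          intro i hi
          have hk := ih i hi
          have := hsame_step (i - (((k+1) : ℕ) : Fin (n+1)))
          rw [show (i - (((k+1) : ℕ) : Fin (n+1))) + 1 = i - ((k : ℕ) : Fin (n+1)) by
            push_cast; ring] at this
          exact this hk
      intro i i' hi
      have := down ((i - i') : Fin (n+1)).val i hi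
      rwa [Fin.cast_val_eq_self (i - i'), show i - (i - i') = i' by ring] at this
    have cutX : ∀ u v, G.Adj u v → u ∉ S → v ∈ S → X.dir u v = true := by
      intro u v hadj hu hv
      have hn1 : ¬∃ i, u = σ i ∧ v = σ (i+1) := by
        rintro ⟨i, rfl, rfl⟩
        exact hu (hall _ _ hv)
      have hn2 : ¬∃ i, v = σ i ∧ u = σ (i+1) := by
        rintro ⟨i, rfl, rfl⟩
        exact hu (hall _ _ hv)
      rw [← offcyc u v hn1 hn2]
      exact hcut u v hadj hu hv
    obtain ⟨X₁, hrev, hX₁⟩ := exists_cocycle X S cutX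
    refine ⟨X₁, Relation.ReflTransGen.single (Or.inr hrev), Or.inl ⟨n, σ, hinj, ?_, ?_⟩⟩
    · intro i
      exact (hX₁ _ _).2 (Or.inr ⟨⟨fun h => hall _ _ h, fun h => hall _ _ h⟩, hdir i⟩)
    · intro a b
      rw [hZ a b, hX₁ a b, hiff a b, hiff b a]
      constructor
      · rintro (⟨haS, hbS, (⟨i, hb, ha⟩ | ⟨hX', hne⟩)⟩ | ⟨hiffS, (⟨i, ha, hb⟩ | ⟨hX', hne⟩)⟩)
        · subst ha; subst hb
          exact absurd (hall _ _ haS) hbS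
        · refine Or.inr ⟨Or.inl ⟨haS, hbS, hX'⟩, ?_⟩
          rintro ⟨i, h1, h2⟩
          rw [h1] at haS
          rw [h2] at hbS
          exact hbS (hall _ _ haS)
        · exact Or.inl ⟨i, ha, hb⟩
        · exact Or.inr ⟨Or.inr ⟨hiffS, hX'⟩, hne⟩
      · rintro (⟨i, ha, hb⟩ | ⟨(⟨haS, hbS, hX'⟩ | ⟨hiffS, hX'⟩), hne⟩)
        · subst ha; subst hb
          exact Or.inr ⟨⟨fun h => hall _ _ h, fun h => hall _ _ h⟩, Or.inl ⟨i, rfl, rfl⟩⟩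
        · refine Or.inl ⟨haS, hbS, Or.inr ⟨hX', ?_⟩⟩
          rintro ⟨i, h1, h2⟩
          rw [h2] at haS
          rw [h1] at hbS
          exact hbS (hall _ _ haS)
        · exact Or.inr ⟨hiffS, Or.inr ⟨hX', hne⟩⟩

private lemma push {O' : PartialOrientation G} (hO' : O'.Acyclic) :
    ∀ Y : PartialOrientation G,
      Relation.ReflTransGen (fun A B => EdgePivot A B ∨ CocycleReversal A B) Y O' →
      ∀ X, CycleReversal X Y →
      Relation.ReflTransGen (fun A B => EdgePivot A B ∨ CocycleReversal A B) X O' := by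
  intro Y h
  induction h using Relation.ReflTransGen.head_induction_on with
  | refl =>
    intro X hc
    exact absurd hc (not_cycleReversal_of_acyclic hO')
  | head hstep htail ih =>
    intro X hc
    obtain ⟨X', hXX', hcase⟩ := commute hc hstep
    rcases hcase with hcyc | rfl
    · exact hXX'.trans (ih X' hcyc)
    · exact hXX'.trans htail

end Aux

end PartialOrientation

/-- If `O'` is acyclic, then `O` and `O'` are equivalent in the
generalized cycle-cocycle reversal system iff they are equivalent in the
generalized cocycle reversal system. -/
theorem stmt3 {V : Type*} [Fintype V] [DecidableEq V] (G : SimpleGraph V)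
    [DecidableRel G.Adj] (hG : G.Connected)
    (O O' : PartialOrientation G) (hO' : O'.Acyclic) :
    PartialOrientation.GenCycleCocycleEquiv O O' ↔
      PartialOrientation.GenCocycleEquiv O O' := by
  constructor
  · intro h
    unfold PartialOrientation.GenCycleCocycleEquiv at h
    unfold PartialOrientation.GenCocycleEquiv
    induction h using Relation.ReflTransGen.head_induction_on with
    | refl => exact Relation.ReflTransGen.refl
    | head hstep htail ih =>
      rcases hstep with hp | hc | hcc
      · exact Relation.ReflTransGen.head (Or.inl hp) ih
      · exact PartialOrientation.push hO' _ ih _ hc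
      · exact Relation.ReflTransGen.head (Or.inr hcc) ih
  · intro h
    exact Relation.ReflTransGen.mono (fun A B hab => hab.elim Or.inl (fun hcc => Or.inr (Or.inr hcc))) _ _ h
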